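/- arXiv:2505.00206 — 4 statements merged into one kernel-verified Lean document; each statement's English description precedes it below -/
import Mathlib

section
/- Fix an integer k ≥ 2, an integer n ≥ 2, a real α > 0 such that d = α log₂ n is a positive integer. An instance sampled from the model distribution k-OV_0^α(n) has no solution with probability at least 1 − n^{−k}; equivalently, the probability that there exists a tuple (s_1,…,s_k) ∈ {1,…,n}^k with U_{1,s_1},…,U_{k,s_k} orthogonal is at most n^{−k}. -/
open Finset

/-- The weight of a `p`-biased bit: `1` has probability `p`, `0` has probability `1 - p`. -/
noncomputable def bern (p : ℝ) (b : Bool) : ℝ := if b then p else 1 - p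

/-- Vectors `u 0, …, u (k-1) ∈ {0,1}^d` are orthogonal if at every coordinate at least one
of them has a zero. -/
def Orthog {k d : ℕ} (u : Fin k → Fin d → Bool) : Prop :=
  ∀ j : Fin d, ∃ l : Fin k, u l j = false

instance {k d : ℕ} : DecidablePred (@Orthog k d) := fun u =>
  inferInstanceAs (Decidable (∀ j : Fin d, ∃ l : Fin k, u l j = false))

/-!
Union bound over the `n ^ k` tuples `s`. For a fixed `s` the bits `U l (s l) j` are distinct
coordinates of the i.i.d. family, and the `d` columns `j` are independent; a column is all ones
with probability `p ^ k`, so `s` is a solution with probability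
`(1 - p ^ k) ^ d = 2 ^ (-2 k d / α) = n ^ (-2 k)`.
-/

section Probability

variable {X ι κ α : Type*} [Fintype X] [Fintype ι] [DecidableEq ι] [Fintype κ] [DecidableEq κ]
  [Fintype α]

open Classical in
/-- Decidability is classical so that the predicate can be rewritten freely;
`prob_eq_sum_ite` recovers the sum for any given instance. -/
noncomputable def prob (μ : X → ℝ) (P : X → Prop) : ℝ :=
  ∑ x, if P x then μ x else 0

lemma prob_eq_sum_ite (μ : X → ℝ) (P : X → Prop) [DecidablePred P] :
    prob μ P = ∑ x, if P x then μ x else 0 := by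
  unfold prob
  congr!

lemma prob_not {μ : X → ℝ} (hμ : ∑ x, μ x = 1) (P : X → Prop) :
    prob μ (fun x => ¬ P x) = 1 - prob μ P := by
  classical
  rw [← hμ, prob_eq_sum_ite, prob_eq_sum_ite, ← Finset.sum_sub_distrib]
  exact Fintype.sum_congr _ _ fun x => by split_ifs <;> simp

lemma prob_exists_le_sum {σ : Type*} [Fintype σ] {μ : X → ℝ} (hμ : ∀ x, 0 ≤ μ x)
    (P : σ → X → Prop) : prob μ (fun x => ∃ s, P s x) ≤ ∑ s, prob μ (P s) := by
  classical
  simp only [prob_eq_sum_ite]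
  rw [Finset.sum_comm]
  refine Finset.sum_le_sum fun x _ => ?_
  have hterm : ∀ s, 0 ≤ if P s x then μ x else 0 := fun s => by split_ifs <;> simp [hμ x]
  split_ifs with h
  · obtain ⟨s, hs⟩ := h
    simpa [hs] using Finset.single_le_sum (fun s _ => hterm s) (Finset.mem_univ s)
  · exact Finset.sum_nonneg fun s _ => hterm s

def prodWeight (w : α → ℝ) (f : ι → α) : ℝ :=
  ∏ i, w (f i)

omit [DecidableEq ι] [Fintype α] in
lemma prodWeight_nonneg {w : α → ℝ} (hw : ∀ a, 0 ≤ w a) (f : ι → α) : 0 ≤ prodWeight w f :=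
  Finset.prod_nonneg fun i _ => hw (f i)

lemma sum_prodWeight {w : α → ℝ} (hw : ∑ a, w a = 1) : ∑ f : ι → α, prodWeight w f = 1 := by
  rw [← Finset.prod_const_one, ← hw]
  exact (Fintype.prod_sum fun _ : ι => w).symm

lemma prob_prodWeight_forall (w : α → ℝ) (Q : α → Prop) :
    prob (prodWeight w) (fun f : ι → α => ∀ i, Q (f i)) = prob w Q ^ Fintype.card ι := by
  classical
  simp only [prob_eq_sum_ite, prodWeight, ← Fintype.prod_ite_zero]
  rw [← Fintype.prod_sum fun _ a => if Q a then w a else 0, Finset.prod_const, Finset.card_univ]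

lemma prob_prodWeight_curry (w : α → ℝ) (P : (ι → κ → α) → Prop) :
    prob (prodWeight (prodWeight w)) P =
      prob (prodWeight w) (fun f : ι × κ → α => P (Function.curry f)) := by
  classical
  simp only [prob_eq_sum_ite]
  rw [← (Equiv.curry ι κ α).sum_comp]
  simp [prodWeight, Fintype.prod_prod_type]

lemma prob_prodWeight_comp_of_injective {w : α → ℝ} (hw : ∑ a, w a = 1) {e : κ → ι}
    (he : Function.Injective e) (P : (κ → α) → Prop) :
    prob (prodWeight w) (fun f => P (f ∘ e)) = prob (prodWeight w) P := by
  classical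
  let σ : κ ⊕ {i // i ∉ Set.range e} ≃ ι :=
    ((Equiv.ofInjective e he).sumCongr (Equiv.refl _)).trans (Equiv.sumCompl (· ∈ Set.range e))
  let Ψ : (κ → α) × ({i // i ∉ Set.range e} → α) ≃ (ι → α) :=
    (Equiv.sumArrowEquivProdArrow _ _ α).symm.trans (σ.arrowCongr (Equiv.refl α))
  have hΨe : ∀ g c, Ψ (g, c) ∘ e = g := by
    intro g c
    funext x
    simp [Ψ, σ]
  have hΨw : ∀ g c, prodWeight w (Ψ (g, c)) = prodWeight w g * prodWeight w c := by
    intro g c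
    rw [prodWeight, ← σ.prod_comp, Fintype.prod_sum_type]
    simp [Ψ, prodWeight]
  simp only [prob_eq_sum_ite]
  rw [← Ψ.sum_comp, Fintype.sum_prod_type]
  simp only [hΨe, hΨw, ← ite_zero_mul, ← Finset.mul_sum, sum_prodWeight hw, mul_one]

end Probability

lemma sum_bern (p : ℝ) : ∑ b, bern p b = 1 := by
  simp [bern]

lemma bern_nonneg {p : ℝ} (hp₀ : 0 ≤ p) (hp₁ : p ≤ 1) (b : Bool) : 0 ≤ bern p b := by
  cases b <;> simp [bern] <;> linarith

lemma prob_bern_eq_true (p : ℝ) : prob (bern p) (· = true) = p := by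
  simp [prob, bern]

section OrthogonalVectors

variable {k n d : ℕ}

noncomputable def ovWeight (p : ℝ) : (Fin k → Fin n → Fin d → Bool) → ℝ :=
  prodWeight (prodWeight (prodWeight (bern p)))

lemma sum_ovWeight (p : ℝ) : ∑ U : Fin k → Fin n → Fin d → Bool, ovWeight p U = 1 :=
  sum_prodWeight (sum_prodWeight (sum_prodWeight (sum_bern p)))

lemma ovWeight_nonneg {p : ℝ} (hp₀ : 0 ≤ p) (hp₁ : p ≤ 1) (U : Fin k → Fin n → Fin d → Bool) :
    0 ≤ ovWeight p U :=
  prodWeight_nonneg (prodWeight_nonneg (prodWeight_nonneg (bern_nonneg hp₀ hp₁))) U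

lemma prob_ovWeight_orthog (p : ℝ) (s : Fin k → Fin n) :
    prob (ovWeight p) (fun U : Fin k → Fin n → Fin d → Bool => Orthog fun l => U l (s l)) =
      (1 - p ^ k) ^ d := by
  have he : Function.Injective fun x : Fin d × Fin k => ((x.2, s x.2), x.1) := by
    rintro ⟨j, l⟩ ⟨j', l'⟩ h
    simp_all
  calc _ = prob (prodWeight (bern p))
        (fun f : (Fin k × Fin n) × Fin d → Bool => ∀ j, ∃ l, f ((l, s l), j) = false) := by
        rw [ovWeight, prob_prodWeight_curry, prob_prodWeight_curry]
        rfl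
    _ = prob (prodWeight (bern p)) (fun g : Fin d × Fin k → Bool => ∀ j, ∃ l, g (j, l) = false) :=
        prob_prodWeight_comp_of_injective (sum_bern p) he
          (fun g : Fin d × Fin k → Bool => ∀ j, ∃ l, g (j, l) = false)
    _ = prob (prodWeight (prodWeight (bern p)))
        (fun c : Fin d → Fin k → Bool => ∀ j, ∃ l, c j l = false) :=
        (prob_prodWeight_curry (bern p)
          fun c : Fin d → Fin k → Bool => ∀ j, ∃ l, c j l = false).symm
    _ = prob (prodWeight (bern p)) (fun v : Fin k → Bool => ∃ l, v l = false) ^ d := by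
        rw [prob_prodWeight_forall (prodWeight (bern p)) fun v => ∃ l, v l = false,
          Fintype.card_fin]
    _ = (1 - p ^ k) ^ d := by
        simp only [← Bool.not_eq_true, ← not_forall]
        rw [prob_not (sum_prodWeight (sum_bern p)), prob_prodWeight_forall (bern p) (· = true),
          prob_bern_eq_true, Fintype.card_fin]

lemma prob_ovWeight_exists_orthog_le {p : ℝ} (hp₀ : 0 ≤ p) (hp₁ : p ≤ 1) :
    prob (ovWeight p)
        (fun U : Fin k → Fin n → Fin d → Bool => ∃ s : Fin k → Fin n, Orthog fun l => U l (s l))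
      ≤ (n : ℝ) ^ k * (1 - p ^ k) ^ d := by
  refine (prob_exists_le_sum (ovWeight_nonneg hp₀ hp₁) _).trans_eq ?_
  simp [prob_ovWeight_orthog]

end OrthogonalVectors

lemma one_sub_rpow_one_div_pow {q : ℝ} (hq : q ≤ 1) {k : ℕ} (hk : k ≠ 0) :
    1 - ((1 - q) ^ ((1 : ℝ) / k)) ^ k = q := by
  rw [← Real.rpow_natCast, ← Real.rpow_mul (by linarith), one_div_mul_cancel (by exact_mod_cast hk),
    Real.rpow_one, sub_sub_cancel]

lemma two_rpow_div_pow_eq_rpow {α c n : ℝ} (hα : α ≠ 0) (hn : 0 < n) {d : ℕ}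
    (hd : (d : ℝ) = α * Real.logb 2 n) : ((2 : ℝ) ^ (c / α)) ^ d = n ^ c := by
  rw [← Real.rpow_natCast, ← Real.rpow_mul zero_le_two, hd,
    show c / α * (α * Real.logb 2 n) = Real.logb 2 n * c by field_simp,
    Real.rpow_mul zero_le_two, Real.rpow_logb zero_lt_two (by norm_num) hn]

theorem stmt2_general (k n : ℕ) (hk : 2 ≤ k) (hn : 2 ≤ n) (α : ℝ) (hα : 0 < α)
    (d : ℕ) (hdα : (d : ℝ) = α * Real.logb 2 n)
    (p : ℝ) (hp : p = (1 - (2 : ℝ) ^ (-(2 * (k : ℝ)) / α)) ^ ((1 : ℝ) / k)) :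
    1 - (n : ℝ) ^ (-(k : ℝ)) ≤
      (∑ U : Fin k → Fin n → Fin d → Bool,
        if ¬ ∃ s : Fin k → Fin n, Orthog (fun l => U l (s l)) then
          ∏ l : Fin k, ∏ i : Fin n, ∏ j : Fin d, bern p (U l i j)
        else 0) ∧
    (∑ U : Fin k → Fin n → Fin d → Bool,
        if ∃ s : Fin k → Fin n, Orthog (fun l => U l (s l)) then
          ∏ l : Fin k, ∏ i : Fin n, ∏ j : Fin d, bern p (U l i j)
        else 0) ≤ (n : ℝ) ^ (-(k : ℝ)) := by
  have hn₀ : (0 : ℝ) < n := by positivity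
  have hq₀ : 0 < (2 : ℝ) ^ (-(2 * (k : ℝ)) / α) := by positivity
  have hq₁ : (2 : ℝ) ^ (-(2 * (k : ℝ)) / α) ≤ 1 :=
    Real.rpow_le_one_of_one_le_of_nonpos one_le_two
      (div_nonpos_of_nonpos_of_nonneg (by linarith [k.cast_nonneg (α := ℝ)]) hα.le)
  have hp₀ : 0 ≤ p := hp ▸ Real.rpow_nonneg (by linarith) _
  have hp₁ : p ≤ 1 := hp ▸ Real.rpow_le_one (by linarith) (by linarith) (by positivity)
  have hunion : prob (ovWeight p)
      (fun U : Fin k → Fin n → Fin d → Bool => ∃ s : Fin k → Fin n, Orthog fun l => U l (s l))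
      ≤ (n : ℝ) ^ (-(k : ℝ)) := calc
    _ ≤ (n : ℝ) ^ k * (1 - p ^ k) ^ d := prob_ovWeight_exists_orthog_le hp₀ hp₁
    _ = (n : ℝ) ^ k * (n : ℝ) ^ (-(2 * (k : ℝ))) := by
        rw [hp, one_sub_rpow_one_div_pow hq₁ (by omega), two_rpow_div_pow_eq_rpow hα.ne' hn₀ hdα]
    _ = (n : ℝ) ^ (-(k : ℝ)) := by
        rw [← Real.rpow_natCast, ← Real.rpow_add hn₀]
        ring_nf
  have hcompl := prob_not (sum_ovWeight p)
    (fun U : Fin k → Fin n → Fin d → Bool => ∃ s : Fin k → Fin n, Orthog fun l => U l (s l))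
  rw [prob_eq_sum_ite] at hunion
  rw [prob_eq_sum_ite, prob_eq_sum_ite] at hcompl
  exact ⟨(sub_le_sub_left hunion 1).trans_eq hcompl.symm, hunion⟩

/-- An instance sampled from the model distribution `k-OV₀^α(n)` has no
solution with probability at least `1 - n^{-k}`; equivalently, the probability that some
tuple `(s_1,…,s_k)` is a solution is at most `n^{-k}`. -/
theorem stmt2 (k n : ℕ) (hk : 2 ≤ k) (hn : 2 ≤ n) (α : ℝ) (hα : 0 < α)
    (d : ℕ) (hd : 0 < d) (hdα : (d : ℝ) = α * Real.logb 2 n)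
    (p : ℝ) (hp : p = (1 - (2 : ℝ) ^ (-(2 * (k : ℝ)) / α)) ^ ((1 : ℝ) / k)) :
    1 - (n : ℝ) ^ (-(k : ℝ)) ≤
      (∑ U : Fin k → Fin n → Fin d → Bool,
        if ¬ ∃ s : Fin k → Fin n, Orthog (fun l => U l (s l)) then
          ∏ l : Fin k, ∏ i : Fin n, ∏ j : Fin d, bern p (U l i j)
        else 0) ∧
    (∑ U : Fin k → Fin n → Fin d → Bool,
        if ∃ s : Fin k → Fin n, Orthog (fun l => U l (s l)) then
          ∏ l : Fin k, ∏ i : Fin n, ∏ j : Fin d, bern p (U l i j)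
        else 0) ≤ (n : ℝ) ^ (-(k : ℝ)) :=
  stmt2_general k n hk hn α hα d hdα p hp
end

section
/- Fix an integer k ≥ 2 and p ∈ (0, 1/2]. Let Y ∈ {0,1}^k be the output of the per-coordinate planting process with parameters k and p. Then for every x ∈ {0,1}^k, writing m for the number of ones in x, Pr[Y = x] = p^m (1−p)^{k−m} − (−1)^{k−m} p^k. -/
open Finset

/-- The number of ones in a bit string. -/
def ones {k : ℕ} (x : Fin k → Bool) : ℕ := (Finset.univ.filter fun i => x i = true).card

/-- Flipping the last bit of a bit string. -/
def flipLast {k : ℕ} (x : Fin k → Bool) : Fin k → Bool :=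
  fun i => if (i : ℕ) = k - 1 then !(x i) else x i

/-- The transition kernel of the per-coordinate planting process: given the sampled string
`x` with `m` ones, if `k - m` is even the last bit is flipped with probability
`(p/(1-p))^(k-m)`; otherwise `x` is kept. `plantTrans k p x y` is the probability of
outputting `y` given that `x` was sampled. -/
noncomputable def plantTrans (k : ℕ) (p : ℝ) (x y : Fin k → Bool) : ℝ :=
  if Even (k - ones x) then
    (if y = flipLast x then (p / (1 - p)) ^ (k - ones x) else 0) +
      (if y = x then 1 - (p / (1 - p)) ^ (k - ones x) else 0)
  else if y = x then 1 else 0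

/-- The output distribution of the per-coordinate planting process with parameters `k`, `p`:
first sample `k` i.i.d. `p`-biased bits, then apply the flipping step. -/
noncomputable def plantPMF (k : ℕ) (p : ℝ) (y : Fin k → Bool) : ℝ :=
  ∑ x : Fin k → Bool, (∏ i : Fin k, bern p (x i)) * plantTrans k p x y

/-!
Only two sampled strings can produce the output `x`: `x` itself, kept, and `flipLast x`,
flipped. Flipping one bit changes the parity of the number of ones, so exactly one of the two
has an even number of zeros. A string `z` with `k - m` zeros is drawn and then flipped with
probability `p^m (1-p)^(k-m) (p/(1-p))^(k-m) = p^k`, whatever `z` is. Hence `Pr[Y = x]` is the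
weight of `x` minus `p^k` when `k - m` is even, and plus `p^k` when it is odd.
-/

lemma ones_le {k : ℕ} (x : Fin k → Bool) : ones x ≤ k := by
  simpa [ones] using card_filter_le (univ : Finset (Fin k)) fun i => x i = true

lemma prod_bern {k : ℕ} (p : ℝ) (x : Fin k → Bool) :
    ∏ i, bern p (x i) = p ^ ones x * (1 - p) ^ (k - ones x) := by
  have hcompl : #{i | ¬x i = true} = k - ones x := by
    rw [filter_not, card_sdiff_of_subset (filter_subset _ _), card_univ, Fintype.card_fin]
    rfl
  simp only [bern, prod_ite, prod_const, hcompl]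
  rfl

lemma flipLast_involutive {k : ℕ} : Function.Involutive (flipLast (k := k)) := by
  intro x
  funext i
  by_cases h : (i : ℕ) = k - 1 <;> simp [flipLast, h]

lemma flipLast_ne {k : ℕ} (hk : k ≠ 0) (x : Fin k → Bool) : flipLast x ≠ x := by
  intro h
  simpa [flipLast] using congrFun h ⟨k - 1, by omega⟩

lemma odd_ones_flipLast_add_ones {k : ℕ} (hk : k ≠ 0) (x : Fin k → Bool) :
    Odd (ones (flipLast x) + ones x) := by
  set j : Fin k := ⟨k - 1, by omega⟩
  have hsplit : ∀ y : Fin k → Bool,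
      ones y = (if y j = true then 1 else 0) + ∑ i ∈ {j}ᶜ, if y i = true then 1 else 0 := by
    intro y
    rw [ones, card_filter, Fintype.sum_eq_add_sum_compl j]
  have hrest : ∑ i ∈ {j}ᶜ, (if flipLast x i = true then 1 else 0)
      = ∑ i ∈ {j}ᶜ, if x i = true then 1 else 0 := by
    refine sum_congr rfl fun i hi => ?_
    have hij : (i : ℕ) ≠ k - 1 := fun h => (mem_compl.1 hi) (mem_singleton.2 (Fin.ext h))
    simp only [flipLast, hij, if_false]
  have hj : flipLast x j = !x j := by simp [flipLast, j]
  rw [hsplit (flipLast x), hsplit x, hrest, hj]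
  cases x j <;> simp [parity_simps]

lemma even_sub_ones_flipLast_iff {k : ℕ} (hk : k ≠ 0) (x : Fin k → Bool) :
    Even (k - ones (flipLast x)) ↔ ¬Even (k - ones x) := by
  have hodd := odd_ones_flipLast_add_ones hk x
  have h₁ := ones_le (flipLast x)
  have h₂ := ones_le x
  rw [Nat.odd_iff] at hodd
  simp only [Nat.even_iff]
  omega

lemma prod_bern_mul_div_pow {k : ℕ} {p : ℝ} (hp : p ≠ 1) (x : Fin k → Bool) :
    (∏ i, bern p (x i)) * (p / (1 - p)) ^ (k - ones x) = p ^ k := by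
  have hq : 1 - p ≠ 0 := sub_ne_zero.2 hp.symm
  rw [prod_bern, div_pow, mul_assoc, mul_div_cancel₀ _ (pow_ne_zero _ hq), ← pow_add,
    Nat.add_sub_cancel' (ones_le x)]

lemma plantTrans_self {k : ℕ} (hk : k ≠ 0) (p : ℝ) (x : Fin k → Bool) :
    plantTrans k p x x = if Even (k - ones x) then 1 - (p / (1 - p)) ^ (k - ones x) else 1 := by
  simp [plantTrans, (flipLast_ne hk x).symm]

lemma plantTrans_flipLast {k : ℕ} (hk : k ≠ 0) (p : ℝ) (x : Fin k → Bool) :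
    plantTrans k p (flipLast x) x
      = if Even (k - ones x) then 0 else (p / (1 - p)) ^ (k - ones (flipLast x)) := by
  by_cases heven : Even (k - ones x) <;>
    simp [plantTrans, even_sub_ones_flipLast_iff hk, heven, flipLast_involutive x,
      (flipLast_ne hk x).symm]

lemma plantPMF_eq_add {k : ℕ} (hk : k ≠ 0) (p : ℝ) (x : Fin k → Bool) :
    plantPMF k p x = (∏ i, bern p (x i)) * plantTrans k p x x
      + (∏ i, bern p (flipLast x i)) * plantTrans k p (flipLast x) x := by
  refine Fintype.sum_eq_add _ _ (flipLast_ne hk x).symm fun z ⟨hzx, hzf⟩ => ?_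
  have hxz : x ≠ flipLast z := fun h => hzf (by rw [h, flipLast_involutive z])
  simp [plantTrans, Ne.symm hzx, hxz]

theorem stmt5_general (k : ℕ) (hk : 2 ≤ k) (p : ℝ) (hp2 : p ≤ 1 / 2)
    (x : Fin k → Bool) :
    plantPMF k p x
      = p ^ ones x * (1 - p) ^ (k - ones x) - (-1 : ℝ) ^ (k - ones x) * p ^ k := by
  have hk0 : k ≠ 0 := by omega
  have hp : p ≠ 1 := by linarith
  rw [plantPMF_eq_add hk0, plantTrans_self hk0, plantTrans_flipLast hk0, ← prod_bern]
  by_cases heven : Even (k - ones x)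
  · rw [if_pos heven, if_pos heven, heven.neg_one_pow, mul_zero, add_zero, mul_sub,
      prod_bern_mul_div_pow hp]
    ring
  · rw [if_neg heven, if_neg heven, (Nat.not_even_iff_odd.1 heven).neg_one_pow,
      prod_bern_mul_div_pow hp]
    ring

/-- The output `Y` of the per-coordinate planting process satisfies
`Pr[Y = x] = p^m (1-p)^{k-m} - (-1)^{k-m} p^k`, where `m` is the number of ones in `x`. -/
theorem stmt5 (k : ℕ) (hk : 2 ≤ k) (p : ℝ) (hp0 : 0 < p) (hp2 : p ≤ 1 / 2)
    (x : Fin k → Bool) :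
    plantPMF k p x
      = p ^ ones x * (1 - p) ^ (k - ones x) - (-1 : ℝ) ^ (k - ones x) * p ^ k :=
  stmt5_general k hk p hp2 x
end

section
/- Fix an integer k ≥ 2 and p ∈ (0, 1/2]. The function P_k : {0,1}^k → ℝ defined by P_k(x) = p^m (1−p)^{k−m} − (−1)^{k−m} p^k (where m is the number of ones in x) is a probability mass function: P_k(x) ≥ 0 for every x ∈ {0,1}^k, and the sum of P_k(x) over all x ∈ {0,1}^k equals 1. -/
open Finset

/-- The planted per-coordinate distribution
`P_k(x) = p^m (1-p)^{k-m} - (-1)^{k-m} p^k`, where `m` is the number of ones in `x`. -/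
noncomputable def Pk (k : ℕ) (p : ℝ) (x : Fin k → Bool) : ℝ :=
  p ^ ones x * (1 - p) ^ (k - ones x) - (-1 : ℝ) ^ (k - ones x) * p ^ k

lemma card_filter_not_eq_sub_ones {k : ℕ} (x : Fin k → Bool) :
    #{i | ¬x i = true} = k - ones x := by
  have := card_filter_add_card_filter_not (s := (univ : Finset (Fin k))) (p := fun i => x i = true)
  rw [card_univ, Fintype.card_fin] at this
  unfold ones
  omega

lemma prod_ite_eq_pow_ones {M : Type*} [CommMonoid M] {k : ℕ} (a b : M) (x : Fin k → Bool) :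
    ∏ i, (if x i then a else b) = a ^ ones x * b ^ (k - ones x) := by
  rw [prod_ite, prod_const, prod_const, card_filter_not_eq_sub_ones]
  rfl

lemma sum_prod_ite_eq_add_pow {R : Type*} [CommSemiring R] {k : ℕ} (a b : R) :
    ∑ x : Fin k → Bool, ∏ i, (if x i then a else b) = (a + b) ^ k := by
  convert (Fintype.prod_sum fun (_ : Fin k) (c : Bool) => if c then a else b).symm
  simp

lemma Pk_eq_prod_sub_prod (k : ℕ) (p : ℝ) (x : Fin k → Bool) :
    Pk k p x = ∏ i, (if x i then p else 1 - p) - ∏ i, (if x i then p else -p) := by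
  rw [prod_ite_eq_pow_ones, prod_ite_eq_pow_ones, Pk, neg_pow p, mul_left_comm, ← pow_add,
    Nat.add_sub_cancel' (ones_le x)]

lemma sum_Pk {k : ℕ} (hk : k ≠ 0) (p : ℝ) : ∑ x, Pk k p x = 1 := by
  simp_rw [Pk_eq_prod_sub_prod, sum_sub_distrib, sum_prod_ite_eq_add_pow]
  simp [hk]

lemma Pk_nonneg (k : ℕ) {p : ℝ} (hp0 : 0 ≤ p) (hp : p ≤ 1 - p) (x : Fin k → Bool) :
    0 ≤ Pk k p x := by
  have hsign : (-1 : ℝ) ^ (k - ones x) * p ^ k ≤ p ^ k := by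
    simpa [abs_mul, abs_of_nonneg (pow_nonneg hp0 k)] using
      le_abs_self ((-1 : ℝ) ^ (k - ones x) * p ^ k)
  have hpow : p ^ k ≤ p ^ ones x * (1 - p) ^ (k - ones x) :=
    calc p ^ k = p ^ ones x * p ^ (k - ones x) := by rw [← pow_add, Nat.add_sub_cancel' (ones_le x)]
      _ ≤ p ^ ones x * (1 - p) ^ (k - ones x) := by gcongr
  rw [Pk]
  linarith

/-- For `k ≥ 2` and `p ∈ (0, 1/2]`, the function `P_k` is a probability mass
function: it is nonnegative and sums to `1` over `{0,1}^k`. -/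
theorem stmt6 (k : ℕ) (hk : 2 ≤ k) (p : ℝ) (hp0 : 0 < p) (hp2 : p ≤ 1 / 2) :
    (∀ x : Fin k → Bool, 0 ≤ Pk k p x) ∧ (∑ x : Fin k → Bool, Pk k p x) = 1 :=
  ⟨Pk_nonneg k hp0.le (by linarith), sum_Pk (by omega) p⟩
end

section
/- Fix an integer k ≥ 2 and p ∈ (0, 1/2]. Let Q : {0,1}^k → ℝ be a probability mass function (Q(x) ≥ 0 for all x and Σ_x Q(x) = 1) such that Q(1^k) = 0 and such that for every index i ∈ {1,…,k}, marginalizing out the i-th bit of Q yields k−1 independent p-biased bits (i.e., for every y ∈ {0,1}^{k−1} with m' ones, the sum over b ∈ {0,1} of Q applied to the string obtained from y by inserting b at position i equals p^{m'} (1−p)^{(k−1)−m'}). Then Q = P_k, i.e., Q(x) = p^m (1−p)^{k−m} − (−1)^{k−m} p^k for every x ∈ {0,1}^k with m ones. -/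
open Finset

lemma eq_true_of_ones_eq {k : ℕ} {x : Fin k → Bool} (h : ones x = k) : x = fun _ => true := by
  funext i
  exact card_filter_eq_iff.mp (by simpa [ones] using h) i (mem_univ i)

lemma ones_insertNth {k : ℕ} (i : Fin (k + 1)) (b : Bool) (y : Fin k → Bool) :
    ones (i.insertNth b y) = ones y + b.toNat := by
  simp only [ones, card_filter]
  rw [Fin.sum_univ_succAbove _ i]
  cases b <;> simp [add_comm]

/-- Induction on the number of zeros: the marginal at a zero coordinate of `x` relates `x` to the
string with that bit flipped to one. -/
theorem eq_of_sum_insertNth_eq {M : Type*} [AddCommGroup M] {k : ℕ}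
    {Q R : (Fin (k + 1) → Bool) → M} (htop : Q (fun _ => true) = R (fun _ => true))
    (hmarg : ∀ (i : Fin (k + 1)) (y : Fin k → Bool),
      ∑ b : Bool, Q (i.insertNth b y) = ∑ b : Bool, R (i.insertNth b y)) :
    Q = R := by
  funext x
  induction hn : k + 1 - ones x generalizing x with
  | zero =>
    rwa [eq_true_of_ones_eq (le_antisymm (ones_le x) (by omega))]
  | succ n ih =>
    obtain ⟨i, hi⟩ : ∃ i, x i = false := by
      by_contra! hx
      have : x = fun _ => true := funext fun i => by simpa using hx i
      simp [this, ones] at hn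
    set y := i.removeNth x
    have hx : x = i.insertNth false y := by rw [← hi, Fin.insertNth_self_removeNth]
    have hflip : Q (i.insertNth true y) = R (i.insertNth true y) := by
      apply ih
      rw [hx, ones_insertNth] at hn
      rw [ones_insertNth]
      simp only [Bool.toNat_true, Bool.toNat_false] at hn ⊢
      omega
    have h := hmarg i y
    rw [Fintype.sum_bool, Fintype.sum_bool, hflip] at h
    rw [hx]
    exact add_left_cancel h

lemma Pk_allTrue (k : ℕ) (p : ℝ) : Pk k p (fun _ => true) = 0 := by
  simp [Pk, ones]

lemma sum_Pk_insertNth (k : ℕ) (p : ℝ) (i : Fin (k + 1)) (y : Fin k → Bool) :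
    ∑ b : Bool, Pk (k + 1) p (i.insertNth b y) = p ^ ones y * (1 - p) ^ (k - ones y) := by
  have hm := ones_le y
  simp only [Fintype.sum_bool, Pk, ones_insertNth, Bool.toNat_true, Bool.toNat_false, add_zero]
  rw [show k + 1 - (ones y + 1) = k - ones y by omega,
    show k + 1 - ones y = k - ones y + 1 by omega]
  ring

theorem stmt9_general (k : ℕ) (p : ℝ)
    (Q : (Fin (k + 1) → Bool) → ℝ)
    (hQones : Q (fun _ => true) = 0)
    (hQmarg : ∀ (i : Fin (k + 1)) (y : Fin k → Bool),
      (∑ b : Bool, Q (i.insertNth b y)) = p ^ ones y * (1 - p) ^ (k - ones y)) :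
    ∀ x : Fin (k + 1) → Bool, Q x = Pk (k + 1) p x := by
  have hQ : Q = Pk (k + 1) p :=
    eq_of_sum_insertNth_eq (by rw [hQones, Pk_allTrue])
      fun i y => by rw [hQmarg, sum_Pk_insertNth]
  exact congrFun hQ

/-- uniqueness: (with strings of length `k + 1 ≥ 2` playing the role of the
length-`k` strings of the paper) If `Q` is a probability mass function on `{0,1}^{k+1}`
with `Q(1^{k+1}) = 0` such that marginalizing out any one bit yields `k` independent
`p`-biased bits, then `Q = P_{k+1}`. -/
theorem stmt9 (k : ℕ) (hk : 1 ≤ k) (p : ℝ) (hp0 : 0 < p) (hp2 : p ≤ 1 / 2)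
    (Q : (Fin (k + 1) → Bool) → ℝ)
    (hQnonneg : ∀ x, 0 ≤ Q x)
    (hQsum : (∑ x : Fin (k + 1) → Bool, Q x) = 1)
    (hQones : Q (fun _ => true) = 0)
    (hQmarg : ∀ (i : Fin (k + 1)) (y : Fin k → Bool),
      (∑ b : Bool, Q (i.insertNth b y)) = p ^ ones y * (1 - p) ^ (k - ones y)) :
    ∀ x : Fin (k + 1) → Bool, Q x = Pk (k + 1) p x :=
  stmt9_general k p Q hQones hQmarg
end
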